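/- An involution w in S_n avoids both patterns 4231 and 3412 if and only if there exists a composition c = (n_1, ..., n_k) of n such that w is the longest element of the Young subgroup S_{n_1} × S_{n_2} × ... × S_{n_k} of S_n. -/

import Mathlib

/-- One-line notation for an element of `S_n`: a list that is a permutation of `1, …, n`. -/
def IsOneLine (n : ℕ) (w : List ℕ) : Prop :=
  w.Perm ((List.range n).map (· + 1))

/-- `w` and `π` differ by a single elementary Knuth relation (first or second kind,
in either direction). -/
def KnuthStep (w π : List ℕ) : Prop :=
  ∃ u v : List ℕ, ∃ x y z : ℕ, x < y ∧ y < z ∧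
    ((w = u ++ y :: x :: z :: v ∧ π = u ++ y :: z :: x :: v) ∨
     (w = u ++ y :: z :: x :: v ∧ π = u ++ y :: x :: z :: v) ∨
     (w = u ++ x :: z :: y :: v ∧ π = u ++ z :: x :: y :: v) ∨
     (w = u ++ z :: x :: y :: v ∧ π = u ++ x :: z :: y :: v))

/-- Knuth equivalence: the reflexive-transitive closure of elementary Knuth relations. -/
def KnuthEquiv : List ℕ → List ℕ → Prop :=
  Relation.ReflTransGen KnuthStep

/-- `w` contains the pattern `3412`: a subsequence `(a, b, c, d)` with `c < d < a < b`. -/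
def Contains3412 (w : List ℕ) : Prop :=
  ∃ a b c d : ℕ, c < d ∧ d < a ∧ a < b ∧ [a, b, c, d].Sublist w

/-- `w` contains the pattern `4231`: a subsequence `(a, b, c, d)` with `d < b < c < a`. -/
def Contains4231 (w : List ℕ) : Prop :=
  ∃ a b c d : ℕ, d < b ∧ b < c ∧ c < a ∧ [a, b, c, d].Sublist w

/-- The decreasing run `hi, hi - 1, …, lo`. -/
def descFromTo (hi lo : ℕ) : List ℕ :=
  (List.range (hi + 1 - lo)).map (fun i => hi - i)

/-- The increasing run `lo, lo + 1, …, hi`. -/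
def ascFromTo (lo hi : ℕ) : List ℕ :=
  (List.range (hi + 1 - lo)).map (fun i => lo + i)

/-- The length of a longest strictly increasing subsequence of `w`. -/
def lisLen (w : List ℕ) : ℕ :=
  ((w.sublists.filter (fun l => decide (l.IsChain (· < ·)))).map List.length).foldr max 0

/-- The length of a longest strictly decreasing subsequence of `w`. -/
def ldsLen (w : List ℕ) : ℕ :=
  ((w.sublists.filter (fun l => decide (l.IsChain (· > ·)))).map List.length).foldr max 0

/-- The one-line word of the longest element of the Young subgroup attached to a
composition: each consecutive block is reversed.  `s` is the offset already consumed. -/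
def blockRevWord : List ℕ → ℕ → List ℕ
  | [], _ => []
  | m :: rest, s => descFromTo (s + m) (s + 1) ++ blockRevWord rest (s + m)

/-! The first entry `s + m` of an involution word on `{s + 1, …, s + n}` forces `s + 1` into
position `m`. If the word avoids both patterns, an entry above `s + m` strictly between these
positions would complete a `3412`, and an ascent strictly between them a `4231`; so the first block
is `s + m, …, s + 1` and the rest is an involution word on `{s + m + 1, …, s + n}`. Conversely, in a
block-reversal word a pattern whose last entry is below its first cannot straddle two blocks, so it
would be decreasing. -/

open List

theorem mem_descFromTo {hi lo x : ℕ} : x ∈ descFromTo hi lo ↔ lo ≤ x ∧ x ≤ hi := by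
  simp only [descFromTo, List.mem_map, List.mem_range]
  constructor
  · rintro ⟨i, hi, rfl⟩
    omega
  · rintro ⟨hlo, hhi⟩
    exact ⟨hi - x, by omega, by omega⟩

theorem length_descFromTo (hi lo : ℕ) : (descFromTo hi lo).length = hi + 1 - lo := by
  simp [descFromTo]

theorem pairwise_gt_descFromTo (hi lo : ℕ) : (descFromTo hi lo).Pairwise (· > ·) := by
  simp only [descFromTo, List.pairwise_map]
  exact List.pairwise_lt_range.imp_of_mem fun hi' hj' hij => by
    simp only [List.mem_range] at hi' hj'
    omega

theorem eq_descFromTo_of_pairwise_gt {l : List ℕ} {hi lo : ℕ} (hl : l.Pairwise (· > ·))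
    (hlen : l.length = hi + 1 - lo) (hmem : ∀ x ∈ l, lo ≤ x ∧ x ≤ hi) :
    l = descFromTo hi lo := by
  have hsub : l <+~ descFromTo hi lo :=
    List.subperm_of_subset hl.nodup fun x hx => mem_descFromTo.mpr (hmem x hx)
  exact (hsub.perm_of_length_le (by rw [length_descFromTo, hlen])).eq_of_pairwise' hl
    (pairwise_gt_descFromTo hi lo)

theorem Contains4231.mono {u w : List ℕ} (huw : u <+ w) : Contains4231 u → Contains4231 w :=
  fun ⟨a, b, c, d, h₁, h₂, h₃, h⟩ => ⟨a, b, c, d, h₁, h₂, h₃, h.trans huw⟩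

theorem Contains3412.mono {u w : List ℕ} (huw : u <+ w) : Contains3412 u → Contains3412 w :=
  fun ⟨a, b, c, d, h₁, h₂, h₃, h⟩ => ⟨a, b, c, d, h₁, h₂, h₃, h.trans huw⟩

theorem sublist_of_getElem?_eq {α : Type*} {w : List α} {p₁ p₂ p₃ p₄ : ℕ} {a b c d : α}
    (h₁₂ : p₁ < p₂) (h₂₃ : p₂ < p₃) (h₃₄ : p₃ < p₄) (ha : w[p₁]? = some a)
    (hb : w[p₂]? = some b) (hc : w[p₃]? = some c) (hd : w[p₄]? = some d) :
    [a, b, c, d] <+ w := by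
  obtain ⟨hp₄, rfl⟩ := List.getElem?_eq_some_iff.mp hd
  obtain ⟨hp₃, rfl⟩ := List.getElem?_eq_some_iff.mp hc
  obtain ⟨hp₂, rfl⟩ := List.getElem?_eq_some_iff.mp hb
  obtain ⟨hp₁, rfl⟩ := List.getElem?_eq_some_iff.mp ha
  have hpos : [(⟨p₁, hp₁⟩ : Fin w.length), ⟨p₂, hp₂⟩, ⟨p₃, hp₃⟩, ⟨p₄, hp₄⟩].Pairwise (· < ·) := by
    simp only [List.pairwise_cons, List.mem_cons, List.not_mem_nil, forall_eq_or_imp,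
      Fin.mk_lt_mk, IsEmpty.forall_iff, implies_true, and_true, List.Pairwise.nil]
    omega
  simpa using List.map_getElem_sublist hpos

theorem List.Nodup.getElem?_ne {α : Type*} {l : List α} (hl : l.Nodup) {i j : ℕ} {a b : α}
    (ha : l[i]? = some a) (hb : l[j]? = some b) (hij : i ≠ j) : a ≠ b := by
  rintro rfl
  exact hij ((List.getElem?_inj (List.getElem?_eq_some_iff.mp ha).1 hl).mp (ha.trans hb.symm))

theorem sublist_or_sublist_of_sublist_append {u v : List ℕ} (huv : ∀ x ∈ u, ∀ y ∈ v, x < y)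
    {a b c d : ℕ} (hda : d < a) (h : [a, b, c, d] <+ u ++ v) :
    [a, b, c, d] <+ u ∨ [a, b, c, d] <+ v := by
  obtain ⟨l₁, l₂, heq, h₁, h₂⟩ := List.sublist_append_iff.mp h
  rcases l₁ with _ | ⟨x, l₁⟩
  · exact .inr (heq ▸ h₂)
  rcases l₂.eq_nil_or_concat with rfl | ⟨l₂, y, rfl⟩
  · exact .inl (by simpa [heq] using h₁)
  have hax : a = x := by simpa using congrArg List.head? heq
  have hdy : d = y := by
    have := congrArg List.getLast? heq
    rw [List.concat_eq_append, ← List.append_assoc, List.getLast?_concat] at this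
    simpa using this
  have := huv x (h₁.subset (by simp)) y (h₂.subset (by simp))
  omega

theorem mem_blockRevWord {ms : List ℕ} {s x : ℕ} (hx : x ∈ blockRevWord ms s) :
    s < x ∧ x ≤ s + ms.sum := by
  induction ms generalizing s with
  | nil => simp [blockRevWord] at hx
  | cons m ms ih =>
    rcases List.mem_append.mp hx with hx | hx
    · have := mem_descFromTo.mp hx
      simp only [List.sum_cons]
      omega
    · have := ih hx
      simp only [List.sum_cons]
      omega

theorem pairwise_gt_of_sublist_blockRevWord {ms : List ℕ} {s a b c d : ℕ}
    (h : [a, b, c, d] <+ blockRevWord ms s) (hda : d < a) :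
    [a, b, c, d].Pairwise (· > ·) := by
  induction ms generalizing s with
  | nil => simp [blockRevWord] at h
  | cons m ms ih =>
    have hsep : ∀ x ∈ descFromTo (s + m) (s + 1), ∀ y ∈ blockRevWord ms (s + m), x < y :=
      fun x hx y hy => (mem_descFromTo.mp hx).2.trans_lt (mem_blockRevWord hy).1
    rcases sublist_or_sublist_of_sublist_append hsep hda h with h | h
    · exact (pairwise_gt_descFromTo _ _).sublist h
    · exact ih h

theorem not_contains4231_blockRevWord (ms : List ℕ) (s : ℕ) :
    ¬ Contains4231 (blockRevWord ms s) := by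
  rintro ⟨a, b, c, d, hdb, hbc, hca, h⟩
  have := pairwise_gt_of_sublist_blockRevWord h (by omega)
  grind [List.pairwise_cons]

theorem not_contains3412_blockRevWord (ms : List ℕ) (s : ℕ) :
    ¬ Contains3412 (blockRevWord ms s) := by
  rintro ⟨a, b, c, d, hcd, hda, hab, h⟩
  have := pairwise_gt_of_sublist_blockRevWord h hda
  grind [List.pairwise_cons]

/-- `w` is the one-line word of an involution of `{s + 1, …, s + n}`: position `i` holds the
image of `s + i + 1`. -/
structure IsIntervalInvolution (s n : ℕ) (w : List ℕ) : Prop where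
  nodup : w.Nodup
  mem_iff : ∀ x, x ∈ w ↔ s < x ∧ x ≤ s + n
  getElem?_eq : ∀ i a, w[i]? = some a → w[a - 1 - s]? = some (i + 1 + s)

namespace IsIntervalInvolution

variable {s n : ℕ} {w : List ℕ}

theorem of_isOneLine (hw : IsOneLine n w)
    (hinv : ∀ i a : ℕ, w[i]? = some a → w[a - 1]? = some (i + 1)) :
    IsIntervalInvolution 0 n w where
  nodup := hw.nodup_iff.mpr (List.nodup_range.map fun _ _ => Nat.succ.inj)
  mem_iff x := by
    rw [hw.mem_iff]
    simp only [List.mem_map, List.mem_range]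
    constructor
    · rintro ⟨i, hi, rfl⟩
      omega
    · intro hx
      exact ⟨x - 1, by omega, by omega⟩
  getElem?_eq := by simpa using hinv

theorem lt_of_getElem? (h : IsIntervalInvolution s n w) {j b : ℕ} (hb : w[j]? = some b) :
    s < b :=
  ((h.mem_iff b).mp (List.mem_of_getElem? hb)).1

theorem getElem?_sub_one_eq (h : IsIntervalInvolution s n w) {m : ℕ}
    (h0 : w[0]? = some (s + m)) : w[m - 1]? = some (s + 1) := by
  have := h.getElem?_eq 0 _ h0
  rwa [show s + m - 1 - s = m - 1 by omega, show 0 + 1 + s = s + 1 by omega] at this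

theorem lt_of_getElem?_inside_block (h : IsIntervalInvolution s n w) (h3412 : ¬ Contains3412 w)
    {m j b : ℕ} (h0 : w[0]? = some (s + m)) (hj : 0 < j) (hjm : j < m - 1)
    (hb : w[j]? = some b) : b < s + m := by
  have hne := h.nodup.getElem?_ne h0 hb hj.ne
  by_contra! hge
  -- positions `0 < j < m - 1 < b - s - 1` carry `s + m, b, s + 1, s + j + 1`
  exact h3412 ⟨s + m, b, s + 1, j + 1 + s, by omega, by omega, by omega,
    sublist_of_getElem?_eq hj hjm (by omega) h0 hb (h.getElem?_sub_one_eq h0)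
      (h.getElem?_eq j b hb)⟩

theorem lt_of_getElem?_of_lt_in_block (h : IsIntervalInvolution s n w)
    (h4231 : ¬ Contains4231 w) (h3412 : ¬ Contains3412 w) {m i j a b : ℕ}
    (h0 : w[0]? = some (s + m)) (hij : i < j) (hjm : j < m) (ha : w[i]? = some a)
    (hb : w[j]? = some b) : b < a := by
  have hlast := h.getElem?_sub_one_eq h0
  have hab := h.nodup.getElem?_ne ha hb hij.ne
  rcases Nat.eq_zero_or_pos i with rfl | hi
  · obtain rfl : a = s + m := Option.some.inj (ha.symm.trans h0)
    rcases eq_or_ne j (m - 1) with rfl | hj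
    · obtain rfl : b = s + 1 := Option.some.inj (hb.symm.trans hlast)
      omega
    · exact h.lt_of_getElem?_inside_block h3412 h0 hij (by omega) hb
  have has := h.nodup.getElem?_ne ha hlast (by omega)
  have := h.lt_of_getElem? ha
  rcases eq_or_ne j (m - 1) with rfl | hj
  · obtain rfl : b = s + 1 := Option.some.inj (hb.symm.trans hlast)
    omega
  by_contra! hba
  have := h.lt_of_getElem?_inside_block h3412 h0 (hi.trans hij) (by omega) hb
  -- positions `0 < i < j < m - 1` carry `s + m, a, b, s + 1`
  exact h4231 ⟨s + m, a, b, s + 1, by omega, by omega, by omega,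
    sublist_of_getElem?_eq hi hij (by omega) h0 ha hb hlast⟩

theorem take_eq_descFromTo (h : IsIntervalInvolution s n w) (h4231 : ¬ Contains4231 w)
    (h3412 : ¬ Contains3412 w) {m : ℕ} (h0 : w[0]? = some (s + m)) :
    w.take m = descFromTo (s + m) (s + 1) := by
  have hlen : m ≤ w.length := by
    have := (List.getElem?_eq_some_iff.mp (h.getElem?_sub_one_eq h0)).1
    have := h.lt_of_getElem? h0
    omega
  apply eq_descFromTo_of_pairwise_gt
  · refine List.pairwise_iff_getElem.mpr fun i j hi hj hij => ?_
    simp only [List.length_take] at hi hj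
    simp only [List.getElem_take]
    exact h.lt_of_getElem?_of_lt_in_block h4231 h3412 h0 hij (by omega)
      (List.getElem?_eq_getElem _) (List.getElem?_eq_getElem _)
  · simp only [List.length_take]
    omega
  · intro x hx
    obtain ⟨j, hj, hjx⟩ := List.getElem_of_mem hx
    simp only [List.length_take, List.getElem_take] at hj hjx
    have hx : w[j]? = some x := by rw [← hjx]; exact List.getElem?_eq_getElem _
    refine ⟨h.lt_of_getElem? hx, ?_⟩
    rcases Nat.eq_zero_or_pos j with rfl | hj0
    · exact (Option.some.inj (hx.symm.trans h0)).le
    · exact (h.lt_of_getElem?_of_lt_in_block h4231 h3412 h0 hj0 (by omega) h0 hx).le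

theorem drop (h : IsIntervalInvolution s n w) {m : ℕ} (hmn : m ≤ n)
    (htake : w.take m = descFromTo (s + m) (s + 1)) :
    IsIntervalInvolution (s + m) (n - m) (w.drop m) := by
  have hnodup := h.nodup
  rw [← List.take_append_drop m w, List.nodup_append, htake] at hnodup
  have hmem (x : ℕ) : x ∈ w.drop m ↔ s + m < x ∧ x ≤ s + m + (n - m) := by
    constructor
    · intro hx
      have := (h.mem_iff x).mp (List.mem_of_mem_drop hx)
      have := mt mem_descFromTo.mpr fun hx' => hnodup.2.2 x hx' x hx rfl
      omega
    · intro hx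
      have := (h.mem_iff x).mpr ⟨by omega, by omega⟩
      rw [← List.take_append_drop m w, List.mem_append, htake, mem_descFromTo] at this
      exact this.resolve_left (by omega)
  refine ⟨hnodup.2.1, hmem, fun i a ha => ?_⟩
  have hsa := (hmem a).mp (List.mem_of_getElem? ha)
  have := h.getElem?_eq (m + i) a (by rwa [List.getElem?_drop] at ha)
  rwa [List.getElem?_drop, show m + (a - 1 - (s + m)) = a - 1 - s by omega,
    show i + 1 + (s + m) = m + i + 1 + s by omega]

theorem exists_eq_blockRevWord (h : IsIntervalInvolution s n w) (h4231 : ¬ Contains4231 w)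
    (h3412 : ¬ Contains3412 w) :
    ∃ ms : List ℕ, (∀ m ∈ ms, 0 < m) ∧ ms.sum = n ∧ w = blockRevWord ms s := by
  induction n using Nat.strong_induction_on generalizing s w with
  | _ n ih =>
  rcases Nat.eq_zero_or_pos n with rfl | hn
  · refine ⟨[], by simp, rfl, List.eq_nil_iff_forall_not_mem.mpr fun x hx => ?_⟩
    have := (h.mem_iff x).mp hx
    omega
  have hw : 0 < w.length := List.length_pos_of_mem ((h.mem_iff (s + 1)).mpr ⟨by omega, by omega⟩)
  have hx := (h.mem_iff w[0]).mp (List.getElem_mem hw)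
  set m := w[0] - s
  have h0 : w[0]? = some (s + m) := by rw [List.getElem?_eq_getElem hw]; congr 1; omega
  have htake := h.take_eq_descFromTo h4231 h3412 h0
  obtain ⟨ms, hpos, hsum, hdrop⟩ := ih (n - m) (by omega) (h.drop (by omega) htake)
    (mt (Contains4231.mono (List.drop_sublist m w)) h4231)
    (mt (Contains3412.mono (List.drop_sublist m w)) h3412)
  refine ⟨m :: ms, ?_, ?_, ?_⟩
  · exact List.forall_mem_cons.mpr ⟨by omega, hpos⟩
  · simp only [List.sum_cons, hsum]
    omega
  · rw [blockRevWord, ← htake, ← hdrop, List.take_append_drop]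

end IsIntervalInvolution

theorem stmt18 (n : ℕ) (w : List ℕ) (hw : IsOneLine n w)
    (hinv : ∀ i a : ℕ, w[i]? = some a → w[a - 1]? = some (i + 1)) :
    (¬ Contains4231 w ∧ ¬ Contains3412 w) ↔
      ∃ c : List ℕ, (∀ m ∈ c, 0 < m) ∧ c.sum = n ∧ w = blockRevWord c 0 := by
  constructor
  · rintro ⟨h4231, h3412⟩
    exact (IsIntervalInvolution.of_isOneLine hw hinv).exists_eq_blockRevWord h4231 h3412
  · rintro ⟨c, -, -, rfl⟩
    exact ⟨not_contains4231_blockRevWord c 0, not_contains3412_blockRevWord c 0⟩
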